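/- arXiv:1210.1766 — 6 statements merged into one kernel-verified Lean document; each statement's English description precedes it below -/
import Mathlib

section
/- Let (M, 𝓑) be a measurable space, μ a probability measure on M (the prior), and L : M → [0,∞) a measurable likelihood function with 0 < Z := ∫ L dμ < ∞. Define the Bayesian posterior ν := Z⁻¹ • (μ.withDensity L). Then for every probability measure q on M with q ≪ μ such that log L is q-integrable and the log-likelihood ratio log(dq/dμ) is q-integrable, one has q ≪ ν and KL(q ‖ ν) = KL(q ‖ μ) − ∫ log L dq + log Z, where KL(q ‖ p) denotes ∫ log(dq/dp) dq. -/
/-!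
Writing `ν` for the posterior, the chain rule for Radon–Nikodym derivatives gives
`dq/dμ = dq/dν · dν/dμ` with `dν/dμ = L / Z`, `q`-almost everywhere. Taking logarithms,
`log (dq/dν) = log (dq/dμ) - log L + log Z` holds `q`-a.e., and integrating against `q` yields the
identity. Absolute continuity `q ≪ ν` holds because `L > 0` `q`-a.e.
-/

open MeasureTheory Real

/-- `klDivR q p = ∫ log(dq/dp) dq`, the Kullback–Leibler divergence (real-valued),
meaningful when `q ≪ p` and the log-likelihood ratio is `q`-integrable. -/
noncomputable def klDivR {M : Type*} [MeasurableSpace M] (q p : Measure M) : ℝ :=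
  ∫ m, Real.log ((q.rnDeriv p) m).toReal ∂q

open scoped ENNReal

namespace MeasureTheory

variable {α : Type*} {mα : MeasurableSpace α} {μ q : Measure α} {f : α → ℝ≥0∞}

lemma Measure.AbsolutelyContinuous.withDensity_of_ae_ne_zero (hqμ : q ≪ μ) (hf : AEMeasurable f μ)
    (hf_ne_zero : ∀ᵐ x ∂q, f x ≠ 0) : q ≪ μ.withDensity f := by
  intro s hs
  rw [withDensity_apply_eq_zero' hf] at hs
  rw [measure_eq_zero_iff_ae_notMem]
  filter_upwards [measure_eq_zero_iff_ae_notMem.1 (hqμ hs), hf_ne_zero] with x hx hfx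
  exact fun hxs => hx ⟨hfx, hxs⟩

lemma llr_withDensity_right [SigmaFinite μ] [SigmaFinite q] [SigmaFinite (μ.withDensity f)]
    (hqμ : q ≪ μ) (hf : AEMeasurable f μ) (hf_ne_zero : ∀ᵐ x ∂q, f x ≠ 0) :
    llr q (μ.withDensity f) =ᵐ[q] fun x ↦ llr q μ x - log (f x).toReal := by
  have hq := hqμ.withDensity_of_ae_ne_zero hf hf_ne_zero
  have h_chain : ∀ᵐ x ∂q, q.rnDeriv (μ.withDensity f) x * f x = q.rnDeriv μ x := by
    filter_upwards [hqμ (Measure.rnDeriv_mul_rnDeriv hq), hqμ (Measure.rnDeriv_withDensity₀ μ hf)]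
      with x hx hfx
    rwa [← hfx]
  filter_upwards [h_chain, Measure.rnDeriv_pos hqμ, hqμ (Measure.rnDeriv_lt_top q μ)]
    with x hx h_pos h_lt_top
  have h_ne_zero : (q.rnDeriv (μ.withDensity f) x).toReal * (f x).toReal ≠ 0 := by
    rw [← ENNReal.toReal_mul, hx]
    exact (ENNReal.toReal_pos h_pos.ne' h_lt_top.ne).ne'
  rw [llr, llr, ← hx, ENNReal.toReal_mul, log_mul (left_ne_zero_of_mul h_ne_zero)
    (right_ne_zero_of_mul h_ne_zero)]
  ring

end MeasureTheory

/-- For a prior `μ`, a nonnegative likelihood `L` with `0 < Z = ∫ L dμ < ∞`, and the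
Bayesian posterior `ν = Z⁻¹ • μ.withDensity L`: every probability measure `q ≪ μ`
(with `L > 0` holding `q`-a.e. so that `log L` is well defined, `log L` `q`-integrable
and `log(dq/dμ)` `q`-integrable) satisfies `q ≪ ν` and
`KL(q‖ν) = KL(q‖μ) − ∫ log L dq + log Z`. -/
theorem stmt0 {M : Type*} [MeasurableSpace M] (μ : Measure M) [IsProbabilityMeasure μ]
    (L : M → ℝ) (hLmeas : Measurable L) (hL0 : ∀ m, 0 ≤ L m)
    (hLint : Integrable L μ) (hZpos : 0 < ∫ m, L m ∂μ)
    (q : Measure M) [IsProbabilityMeasure q] (hqμ : q ≪ μ)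
    (hLq : ∀ᵐ m ∂q, 0 < L m)
    (hlogL : Integrable (fun m => Real.log (L m)) q)
    (hllr : Integrable (fun m => Real.log ((q.rnDeriv μ) m).toReal) q) :
    q ≪ (ENNReal.ofReal (∫ m, L m ∂μ))⁻¹ •
          μ.withDensity (fun m => ENNReal.ofReal (L m)) ∧
    klDivR q ((ENNReal.ofReal (∫ m, L m ∂μ))⁻¹ •
          μ.withDensity (fun m => ENNReal.ofReal (L m)))
      = klDivR q μ - (∫ m, Real.log (L m) ∂q) + Real.log (∫ m, L m ∂μ) := by
  set Z := ∫ m, L m ∂μ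
  have hZ_ne_zero : ENNReal.ofReal Z ≠ 0 := (ENNReal.ofReal_pos.2 hZpos).ne'
  have hf : AEMeasurable (fun m => ENNReal.ofReal (L m)) μ := hLmeas.ennreal_ofReal.aemeasurable
  have hf_ne_zero : ∀ᵐ m ∂q, ENNReal.ofReal (L m) ≠ 0 := by
    filter_upwards [hLq] with m hm using (ENNReal.ofReal_pos.2 hm).ne'
  have := isFiniteMeasure_withDensity_ofReal hLint.2
  have hq := hqμ.withDensity_of_ae_ne_zero hf hf_ne_zero
  refine ⟨hq.trans (Measure.absolutelyContinuous_smul (by simp)), ?_⟩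
  have h_llr : llr q ((ENNReal.ofReal Z)⁻¹ • μ.withDensity fun m => ENNReal.ofReal (L m))
      =ᵐ[q] fun m => llr q μ m - log (L m) + log Z := by
    filter_upwards [llr_smul_right hq _ (ENNReal.inv_ne_zero.2 ENNReal.ofReal_ne_top)
        (ENNReal.inv_ne_top.2 hZ_ne_zero),
      llr_withDensity_right hqμ hf hf_ne_zero] with m h_smul h_density
    rw [h_smul, h_density, ENNReal.toReal_inv, ENNReal.toReal_ofReal hZpos.le,
      ENNReal.toReal_ofReal (hL0 m), log_inv]
    ring
  calc klDivR q _ = ∫ m, llr q μ m - log (L m) + log Z ∂q := integral_congr_ae h_llr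
    _ = _ := by
      rw [integral_add (by exact hllr.sub hlogL) (integrable_const _),
        integral_sub (by exact hllr) hlogL, integral_const]
      simp [klDivR, llr]
end

section
/- Let (M, 𝓑) be a measurable space, μ a probability measure on M (the prior), and L : M → [0,∞) a measurable likelihood function with 0 < Z := ∫ L dμ < ∞, and let ν := Z⁻¹ • (μ.withDensity L) be the Bayesian posterior. Then for every probability measure q on M with q ≪ μ such that log L is q-integrable and log(dq/dμ) is q-integrable, KL(q ‖ μ) − ∫ log L dq ≥ −log Z, with equality if and only if q = ν. In other words, the Bayesian posterior given by Bayes' rule is the unique solution of the optimization problem: minimize KL(q ‖ μ) − ∫ log L dq over all such probability measures q. -/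
/-!
Writing `ν` for the posterior and `Z = ∫ L dμ`, the chain rule for Radon–Nikodym derivatives gives
`dq/dν = Z · (dq/dμ) / L` `q`-a.e., hence `KL(q‖μ) - ∫ log L dq = KL(q‖ν) - log Z`. Gibbs'
inequality `KL(q‖ν) ≥ 0`, with equality iff `q = ν`, then yields both claims.
-/

open MeasureTheory Real

open InformationTheory

open scoped ENNReal

namespace MeasureTheory

variable {α : Type*} [MeasurableSpace α] {μ q : Measure α} {g : α → ℝ≥0∞}

lemma absolutelyContinuous_withDensity_of_ae_ne_zero (hqμ : q ≪ μ) (hg : AEMeasurable g μ)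
    (hg0 : ∀ᵐ x ∂q, g x ≠ 0) : q ≪ μ.withDensity g := by
  refine Measure.AbsolutelyContinuous.mk fun s hs hgs => ?_
  rw [withDensity_apply _ hs, lintegral_eq_zero_iff' hg.restrict] at hgs
  have : ∀ᵐ x ∂q.restrict s, False := by
    filter_upwards [(hqμ.restrict s).ae_le hgs, ae_restrict_of_ae hg0] with x h0 hne
    exact hne h0
  rwa [Filter.eventually_false_iff_eq_bot, ae_eq_bot, Measure.restrict_eq_zero] at this

/-- Unlike `Measure.rnDeriv_withDensity_right`, `g` may vanish on a `μ`-non-null set, as long as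
it stays positive `q`-a.e. -/
lemma rnDeriv_withDensity_right_of_ae_ne_zero [SigmaFinite μ] [SigmaFinite q] (hqμ : q ≪ μ)
    (hg : Measurable g) (hg0 : ∀ᵐ x ∂q, g x ≠ 0) (hg_top : ∀ᵐ x ∂μ, g x ≠ ∞) :
    q.rnDeriv (μ.withDensity g) =ᵐ[q] fun x ↦ (g x)⁻¹ * q.rnDeriv μ x := by
  have : SigmaFinite (μ.withDensity g) := SigmaFinite.withDensity_of_ne_top hg_top
  have hchain := Measure.rnDeriv_mul_rnDeriv (κ := μ)
    (absolutelyContinuous_withDensity_of_ae_ne_zero hqμ hg.aemeasurable hg0)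
  filter_upwards [hqμ.ae_le hchain, hqμ.ae_le (Measure.rnDeriv_withDensity μ hg), hg0,
    hqμ.ae_le hg_top] with x hx hdens hx0 hxtop
  rw [← hx, Pi.mul_apply, hdens, mul_comm, ENNReal.mul_inv_cancel_right hx0 hxtop]

lemma llr_withDensity_ofReal_right [SigmaFinite μ] [SigmaFinite q] (hqμ : q ≪ μ) {f : α → ℝ}
    (hf : Measurable f) (hf0 : ∀ᵐ x ∂q, 0 < f x) :
    llr q (μ.withDensity fun x ↦ ENNReal.ofReal (f x)) =ᵐ[q] fun x ↦ llr q μ x - log (f x) := by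
  have hdens := rnDeriv_withDensity_right_of_ae_ne_zero hqμ hf.ennreal_ofReal
    (by filter_upwards [hf0] with x hx using by simpa using hx) (by simp)
  filter_upwards [hdens, hf0, Measure.rnDeriv_pos hqμ, hqμ.ae_le (Measure.rnDeriv_lt_top q μ)]
    with x hx hfx hpos htop
  have hr : (q.rnDeriv μ x).toReal ≠ 0 := ENNReal.toReal_ne_zero.mpr ⟨hpos.ne', htop.ne⟩
  rw [llr, hx, ENNReal.toReal_mul, ENNReal.toReal_inv, ENNReal.toReal_ofReal hfx.le,
    log_mul (inv_ne_zero hfx.ne') hr, log_inv, llr]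
  ring

end MeasureTheory

section Posterior

variable {α : Type*} [MeasurableSpace α] {μ q : Measure α} {L : α → ℝ}

noncomputable def posterior (μ : Measure α) (L : α → ℝ) : Measure α :=
  (ENNReal.ofReal (∫ x, L x ∂μ))⁻¹ • μ.withDensity fun x ↦ ENNReal.ofReal (L x)

lemma isProbabilityMeasure_posterior (hL0 : 0 ≤ᵐ[μ] L) (hL : Integrable L μ)
    (hZ : 0 < ∫ x, L x ∂μ) : IsProbabilityMeasure (posterior μ L) := by
  constructor
  rw [posterior, Measure.smul_apply, withDensity_apply _ MeasurableSet.univ, setLIntegral_univ,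
    ← ofReal_integral_eq_lintegral_ofReal hL hL0, smul_eq_mul,
    ENNReal.inv_mul_cancel (ENNReal.ofReal_pos.mpr hZ).ne' ENNReal.ofReal_ne_top]

lemma absolutelyContinuous_posterior (hqμ : q ≪ μ) (hL : Measurable L)
    (hLq : ∀ᵐ x ∂q, 0 < L x) : q ≪ posterior μ L :=
  (absolutelyContinuous_withDensity_of_ae_ne_zero hqμ hL.ennreal_ofReal.aemeasurable
    (by filter_upwards [hLq] with x hx using by simpa using hx)).smul_right (by simp)

variable [SigmaFinite μ]

lemma llr_posterior [IsFiniteMeasure q] (hqμ : q ≪ μ) (hL : Measurable L)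
    (hLq : ∀ᵐ x ∂q, 0 < L x) (hZ : 0 < ∫ x, L x ∂μ) :
    llr q (posterior μ L) =ᵐ[q] fun x ↦ llr q μ x - log (L x) + log (∫ x, L x ∂μ) := by
  have hqν := absolutelyContinuous_withDensity_of_ae_ne_zero hqμ hL.ennreal_ofReal.aemeasurable
    (by filter_upwards [hLq] with x hx using by simpa using hx)
  filter_upwards [llr_smul_right hqν (ENNReal.ofReal (∫ x, L x ∂μ))⁻¹ (by simp) (by simpa using hZ),
    llr_withDensity_ofReal_right hqμ hL hLq] with x hsmul hdens
  rw [posterior, hsmul, hdens, ENNReal.toReal_inv, ENNReal.toReal_ofReal hZ.le, log_inv,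
    sub_neg_eq_add]

lemma integrable_llr_posterior [IsFiniteMeasure q] (hqμ : q ≪ μ) (hL : Measurable L)
    (hLq : ∀ᵐ x ∂q, 0 < L x) (hZ : 0 < ∫ x, L x ∂μ) (hlogL : Integrable (fun x ↦ log (L x)) q)
    (hllr : Integrable (llr q μ) q) : Integrable (llr q (posterior μ L)) q :=
  (integrable_congr (llr_posterior hqμ hL hLq hZ)).mpr
    ((hllr.sub hlogL).add (integrable_const _))

lemma integral_llr_posterior [IsProbabilityMeasure q] (hqμ : q ≪ μ) (hL : Measurable L)
    (hLq : ∀ᵐ x ∂q, 0 < L x) (hZ : 0 < ∫ x, L x ∂μ) (hlogL : Integrable (fun x ↦ log (L x)) q)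
    (hllr : Integrable (llr q μ) q) :
    ∫ x, llr q (posterior μ L) x ∂q
      = ∫ x, llr q μ x ∂q - ∫ x, log (L x) ∂q + log (∫ x, L x ∂μ) := by
  have hdiff : Integrable (fun x ↦ llr q μ x - log (L x)) q := hllr.sub hlogL
  rw [integral_congr_ae (llr_posterior hqμ hL hLq hZ), integral_add hdiff (integrable_const _),
    integral_sub hllr hlogL]
  simp

end Posterior

/-- Variational formulation of Bayes' theorem (Eq. (5) of the paper): for a prior `μ`,
a nonnegative likelihood `L` with `0 < Z = ∫ L dμ < ∞`, every probability measure
`q ≪ μ` (with `L > 0` `q`-a.e. so that `log L` is well defined, `log L` `q`-integrable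
and `log(dq/dμ)` `q`-integrable) satisfies `KL(q‖μ) − ∫ log L dq ≥ −log Z`, with
equality if and only if `q` is the Bayesian posterior `ν = Z⁻¹ • μ.withDensity L`. -/
theorem stmt1 {M : Type*} [MeasurableSpace M] (μ : Measure M) [IsProbabilityMeasure μ]
    (L : M → ℝ) (hLmeas : Measurable L) (hL0 : ∀ m, 0 ≤ L m)
    (hLint : Integrable L μ) (hZpos : 0 < ∫ m, L m ∂μ)
    (q : Measure M) [IsProbabilityMeasure q] (hqμ : q ≪ μ)
    (hLq : ∀ᵐ m ∂q, 0 < L m)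
    (hlogL : Integrable (fun m => Real.log (L m)) q)
    (hllr : Integrable (fun m => Real.log ((q.rnDeriv μ) m).toReal) q) :
    -Real.log (∫ m, L m ∂μ) ≤ klDivR q μ - ∫ m, Real.log (L m) ∂q ∧
    (klDivR q μ - ∫ m, Real.log (L m) ∂q = -Real.log (∫ m, L m ∂μ) ↔
      q = (ENNReal.ofReal (∫ m, L m ∂μ))⁻¹ •
            μ.withDensity (fun m => ENNReal.ofReal (L m))) := by
  change _ ∧ (_ ↔ q = posterior μ L)
  have := isProbabilityMeasure_posterior (ae_of_all μ hL0) hLint hZpos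
  have hqν := absolutelyContinuous_posterior hqμ hLmeas hLq
  have hfin : klDiv q (posterior μ L) ≠ ∞ :=
    klDiv_ne_top hqν (integrable_llr_posterior hqμ hLmeas hLq hZpos hlogL hllr)
  have hkl : (klDiv q (posterior μ L)).toReal
      = klDivR q μ - ∫ m, log (L m) ∂q + log (∫ m, L m ∂μ) := by
    rw [toReal_klDiv_of_measure_eq hqν (by simp),
      integral_llr_posterior hqμ hLmeas hLq hZpos hlogL hllr, klDivR, llr_def]
  have hkl_nonneg := ENNReal.toReal_nonneg (a := klDiv q (posterior μ L))
  refine ⟨by linarith, ?_⟩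
  rw [← klDiv_eq_zero_iff, ← (ENNReal.toReal_eq_zero_iff _).trans (or_iff_left hfin)]
  constructor <;> intro h <;> linarith
end

section
/- Let (M, 𝓑) be a measurable space, p a nonzero finite measure on M (not necessarily a probability measure), and f : M → ℝ a measurable function with ∫ exp(f) dp < ∞. Then for every probability measure q on M with q ≪ p such that f is q-integrable and log(dq/dp) is q-integrable, one has ∫ log(dq/dp) dq ≥ ∫ f dq − log ∫ exp(f) dp. -/
/-!
Tilt `p` by `f`: the measure `p.tilted f` has density `exp f / ∫ exp f dp` with respect to `p`,
so it is a probability measure and `log(dq/d(p.tilted f)) = log(dq/dp) - f + log ∫ exp f dp`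
`q`-a.e. Gibbs' inequality `0 ≤ ∫ log(dq/d(p.tilted f)) dq` is then exactly the claim.
-/

open MeasureTheory Real

namespace MeasureTheory

variable {α : Type*} {mα : MeasurableSpace α} {μ ν : Measure α} {f : α → ℝ}

lemma Measure.AbsolutelyContinuous.neZero_right [NeZero μ] (hμν : μ ≪ ν) : NeZero ν :=
  ⟨fun hν => NeZero.ne μ (Measure.absolutelyContinuous_zero_iff.mp (hν ▸ hμν))⟩

lemma integral_sub_log_integral_exp_le_integral_llr [IsProbabilityMeasure μ] [IsFiniteMeasure ν]
    (hμν : μ ≪ ν) (hfμ : Integrable f μ) (hfν : Integrable (fun x ↦ exp (f x)) ν)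
    (h_int : Integrable (llr μ ν) μ) :
    ∫ x, f x ∂μ - log (∫ x, exp (f x) ∂ν) ≤ ∫ x, llr μ ν x ∂μ := by
  have := hμν.neZero_right
  have := isProbabilityMeasure_tilted hfν
  have gibbs := InformationTheory.integral_llr_add_sub_measure_univ_nonneg
    (hμν.trans (absolutelyContinuous_tilted hfν)) (integrable_llr_tilted_right hμν hfμ h_int hfν)
  rw [integral_llr_tilted_right hμν hfμ hfν h_int] at gibbs
  simp only [probReal_univ] at gibbs
  linarith

end MeasureTheory

theorem stmt3_general {M : Type*} [MeasurableSpace M] (p : Measure M) [IsFiniteMeasure p]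
    (f : M → ℝ)
    (hexp : Integrable (fun m => Real.exp (f m)) p)
    (q : Measure M) [IsProbabilityMeasure q] (hq : q ≪ p)
    (hfq : Integrable f q)
    (hllr : Integrable (fun m => Real.log ((q.rnDeriv p) m).toReal) q) :
    klDivR q p ≥ (∫ m, f m ∂q) - Real.log (∫ m, Real.exp (f m) ∂p) :=
  integral_sub_log_integral_exp_le_integral_llr hq hfq hexp hllr

/-- Donsker–Varadhan/Gibbs inequality against a possibly unnormalized finite reference
measure `p ≠ 0`: for every probability measure `q ≪ p` with `f` `q`-integrable and
`log(dq/dp)` `q`-integrable, `∫ log(dq/dp) dq ≥ ∫ f dq − log ∫ exp(f) dp`. -/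
theorem stmt3 {M : Type*} [MeasurableSpace M] (p : Measure M) [IsFiniteMeasure p]
    (hp : p ≠ 0) (f : M → ℝ) (hf : Measurable f)
    (hexp : Integrable (fun m => Real.exp (f m)) p)
    (q : Measure M) [IsProbabilityMeasure q] (hq : q ≪ p)
    (hfq : Integrable f q)
    (hllr : Integrable (fun m => Real.log ((q.rnDeriv p) m).toReal) q) :
    klDivR q p ≥ (∫ m, f m ∂q) - Real.log (∫ m, Real.exp (f m) ∂p) :=
  stmt3_general p f hexp q hq hfq hllr
end

section
/- Let y ∈ ℝ, ε > 0, C ≥ 0, and define g₂ : ℝ → ℝ by g₂(x) = C · max(0, |x − y| − ε). Then its convex conjugate, computed in the extended reals, is g₂*(μ) := sup_{x ∈ ℝ} (x·μ − g₂(x)) = μ·y + ε·|μ| if |μ| ≤ C, and g₂*(μ) = +∞ otherwise. -/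
/-!
Write `x = y + d`. Since `d μ ≤ |d| |μ| ≤ ε |μ| + |μ| max(0, |d| - ε)`, the objective is bounded by
`μ y + ε |μ|` as soon as `|μ| ≤ C`. Along the ray `d = ±t` (sign chosen so that `d μ = t |μ|`) with
`t ≥ ε` the objective equals `μ y + C ε + t (|μ| - C)`: at `t = ε` this is the bound, and for
`|μ| > C` it tends to `+∞`.
-/

open Filter

/-- The loss `g₂` of the paper. -/
def epsInsensitiveLoss (y ε C x : ℝ) : ℝ := C * max 0 (|x - y| - ε)

section EpsInsensitiveLoss

variable {y ε C : ℝ}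

lemma mul_sub_epsInsensitiveLoss_le {μ : ℝ} (hμ : |μ| ≤ C) (x : ℝ) :
    x * μ - epsInsensitiveLoss y ε C x ≤ μ * y + ε * |μ| := by
  have hdist : |x - y| ≤ ε + max 0 (|x - y| - ε) := by linarith [le_max_right 0 (|x - y| - ε)]
  have hexcess : |μ| * max 0 (|x - y| - ε) ≤ epsInsensitiveLoss y ε C x :=
    mul_le_mul_of_nonneg_right hμ (le_max_left _ _)
  calc x * μ - epsInsensitiveLoss y ε C x
      ≤ μ * y + |x - y| * |μ| - epsInsensitiveLoss y ε C x := by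
        linarith [le_abs_self ((x - y) * μ), abs_mul (x - y) μ]
    _ ≤ μ * y + (ε + max 0 (|x - y| - ε)) * |μ| - epsInsensitiveLoss y ε C x := by
        gcongr
    _ ≤ μ * y + ε * |μ| := by linarith

lemma exists_mul_sub_epsInsensitiveLoss_eq (μ : ℝ) {t : ℝ} (ht : 0 ≤ t) (hεt : ε ≤ t) :
    ∃ x, x * μ - epsInsensitiveLoss y ε C x = μ * y + C * ε + t * (|μ| - C) := by
  have hexcess : max 0 (t - ε) = t - ε := max_eq_right (sub_nonneg.mpr hεt)
  rcases abs_choice μ with hμ | hμ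
  · refine ⟨y + t, ?_⟩
    rw [epsInsensitiveLoss, add_sub_cancel_left, abs_of_nonneg ht, hexcess, hμ]
    ring
  · refine ⟨y - t, ?_⟩
    rw [epsInsensitiveLoss, sub_sub_cancel_left, abs_neg, abs_of_nonneg ht, hexcess, hμ]
    ring

lemma iSup_mul_sub_epsInsensitiveLoss_of_abs_le (hε : 0 ≤ ε) {μ : ℝ} (hμ : |μ| ≤ C) :
    ⨆ x : ℝ, ((x * μ - epsInsensitiveLoss y ε C x : ℝ) : EReal) = ((μ * y + ε * |μ| : ℝ) : EReal) := by
  obtain ⟨x₀, hx₀⟩ := exists_mul_sub_epsInsensitiveLoss_eq (y := y) (C := C) μ hε le_rfl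
  refine le_antisymm (iSup_le fun x => ?_) (le_iSup_of_le x₀ ?_)
  · exact EReal.coe_le_coe (mul_sub_epsInsensitiveLoss_le hμ x)
  · rw [hx₀]
    exact EReal.coe_le_coe (by linarith)

lemma iSup_mul_sub_epsInsensitiveLoss_of_lt_abs (hε : 0 < ε) {μ : ℝ} (hμ : C < |μ|) :
    ⨆ x : ℝ, ((x * μ - epsInsensitiveLoss y ε C x : ℝ) : EReal) = ⊤ := by
  have hray : Tendsto (fun t => μ * y + C * ε + t * (|μ| - C)) atTop atTop :=
    tendsto_atTop_add_const_left _ _ (tendsto_id.atTop_mul_const (sub_pos.mpr hμ))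
  refine iSup_eq_top.mpr fun b hb => ?_
  obtain ⟨r, hbr, -⟩ := EReal.lt_iff_exists_real_btwn.mp hb
  obtain ⟨t, hrt, hεt⟩ := ((hray.eventually_gt_atTop r).and (eventually_ge_atTop ε)).exists
  obtain ⟨x, hx⟩ := exists_mul_sub_epsInsensitiveLoss_eq (y := y) (C := C) μ (hε.le.trans hεt) hεt
  exact ⟨x, hbr.trans (EReal.coe_lt_coe (hx ▸ hrt))⟩

end EpsInsensitiveLoss

theorem stmt10_general (y ε C : ℝ) (hε : 0 < ε) (μ : ℝ) :
    (|μ| ≤ C →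
      (⨆ x : ℝ, ((x * μ - C * max 0 (|x - y| - ε) : ℝ) : EReal))
        = ((μ * y + ε * |μ| : ℝ) : EReal)) ∧
    (¬ (|μ| ≤ C) →
      (⨆ x : ℝ, ((x * μ - C * max 0 (|x - y| - ε) : ℝ) : EReal)) = ⊤) :=
  ⟨iSup_mul_sub_epsInsensitiveLoss_of_abs_le hε.le,
    fun hμ => iSup_mul_sub_epsInsensitiveLoss_of_lt_abs hε (not_le.mp hμ)⟩

/-- Lemma 11 of the paper: the convex conjugate of the ε-insensitive loss
`g₂(x) = C·max(0, |x−y|−ε)`, computed in the extended reals, equals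
`μ·y + ε·|μ|` when `|μ| ≤ C` and `+∞` otherwise. -/
theorem stmt10 (y ε C : ℝ) (hε : 0 < ε) (hC : 0 ≤ C) (μ : ℝ) :
    (|μ| ≤ C →
      (⨆ x : ℝ, ((x * μ - C * max 0 (|x - y| - ε) : ℝ) : EReal))
        = ((μ * y + ε * |μ| : ℝ) : EReal)) ∧
    (¬ (|μ| ≤ C) →
      (⨆ x : ℝ, ((x * μ - C * max 0 (|x - y| - ε) : ℝ) : EReal)) = ⊤) :=
  stmt10_general y ε C hε μ
end

section
/- Let (M, 𝓑) be a measurable space, μ a σ-finite measure on M, L : M → [0,∞) measurable, and q a probability measure with q ≪ μ such that L > 0 holds q-almost everywhere. Then q ≪ μ.withDensity L, and q-almost everywhere the Radon–Nikodym derivatives satisfy d q / d(μ.withDensity L) = (dq/dμ) / L; consequently, whenever log(dq/dμ) and log L are q-integrable, so is log(dq/d(μ.withDensity L)) and ∫ log(dq/dμ) dq − ∫ log L dq = ∫ log( dq / d(μ.withDensity L) ) dq. -/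
open MeasureTheory Real
open scoped NNReal ENNReal

/-! With `ν = μ.withDensity L`, the chain rule `dq/dμ = dq/dν · dν/dμ` and `dν/dμ = L` give
`dq/dν = (dq/dμ) / L` wherever `L` is positive, which is `q`-almost everywhere; taking logarithms
turns the quotient into a difference and the integral identity follows by linearity. -/

namespace MeasureTheory.Measure

variable {α : Type*} [MeasurableSpace α] {μ q : Measure α} {f : α → ℝ≥0∞}

lemma absolutelyContinuous_withDensity_of_ae_ne_zero (hf : Measurable f) (hqμ : q ≪ μ)
    (hf_ne_zero : ∀ᵐ x ∂q, f x ≠ 0) : q ≪ μ.withDensity f := by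
  refine AbsolutelyContinuous.mk fun s hs hs_zero => ?_
  rw [withDensity_apply _ hs, setLIntegral_eq_zero_iff hs hf] at hs_zero
  rw [measure_eq_zero_iff_ae_notMem]
  filter_upwards [hqμ.ae_le hs_zero, hf_ne_zero] with x hx_zero hx_ne_zero hx_mem
    using hx_ne_zero (hx_zero hx_mem)

lemma rnDeriv_withDensity_right_ae_eq_div [SigmaFinite μ] [SigmaFinite q]
    (hf : Measurable f) (hf_ne_top : ∀ᵐ x ∂μ, f x ≠ ∞) (hqμ : q ≪ μ)
    (hf_ne_zero : ∀ᵐ x ∂q, f x ≠ 0) :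
    q.rnDeriv (μ.withDensity f) =ᵐ[q] fun x => q.rnDeriv μ x / f x := by
  have : SigmaFinite (μ.withDensity f) := SigmaFinite.withDensity_of_ne_top hf_ne_top
  have h_chain : q.rnDeriv (μ.withDensity f) * (μ.withDensity f).rnDeriv μ =ᵐ[μ] q.rnDeriv μ :=
    rnDeriv_mul_rnDeriv (absolutelyContinuous_withDensity_of_ae_ne_zero hf hqμ hf_ne_zero)
  filter_upwards [hqμ.ae_le h_chain, hqμ.ae_le (rnDeriv_withDensity μ hf),
    hqμ.ae_le hf_ne_top, hf_ne_zero] with x hx_chain hx_density hx_ne_top hx_ne_zero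
  rw [← hx_chain, Pi.mul_apply, hx_density, ENNReal.mul_div_cancel_right hx_ne_zero hx_ne_top]

lemma log_toReal_rnDeriv_withDensity_right_ae_eq [SigmaFinite μ] [SigmaFinite q]
    (hf : Measurable f) (hf_ne_top : ∀ᵐ x ∂μ, f x ≠ ∞) (hqμ : q ≪ μ)
    (hf_ne_zero : ∀ᵐ x ∂q, f x ≠ 0) :
    (fun x => Real.log (q.rnDeriv (μ.withDensity f) x).toReal)
      =ᵐ[q] fun x => Real.log (q.rnDeriv μ x).toReal - Real.log (f x).toReal := by
  filter_upwards [rnDeriv_withDensity_right_ae_eq_div hf hf_ne_top hqμ hf_ne_zero,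
    rnDeriv_pos hqμ, hqμ.ae_le (rnDeriv_ne_top q μ), hqμ.ae_le hf_ne_top, hf_ne_zero]
    with x hx_div hx_pos hx_rn_ne_top hx_ne_top hx_ne_zero
  rw [hx_div, ENNReal.toReal_div,
    Real.log_div (ENNReal.toReal_ne_zero.2 ⟨hx_pos.ne', hx_rn_ne_top⟩)
      (ENNReal.toReal_ne_zero.2 ⟨hx_ne_zero, hx_ne_top⟩)]

end MeasureTheory.Measure

open MeasureTheory.Measure in
/-- Chain rule for log-likelihood ratios (Eq. (15) of the paper,
`KL(q‖π) − ∫ log p(D|M) dq = KL(q‖p(M,D))`): if `μ` is σ-finite, `L : M → [0,∞)` is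
measurable, `q` is a probability measure with `q ≪ μ` and `L > 0` `q`-a.e., then
`q ≪ μ.withDensity L`, the Radon–Nikodym derivatives satisfy
`dq/d(μ.withDensity L) = (dq/dμ)/L` `q`-a.e., and whenever `log(dq/dμ)` and `log L` are
`q`-integrable, so is `log(dq/d(μ.withDensity L))` and
`∫ log(dq/dμ) dq − ∫ log L dq = ∫ log(dq/d(μ.withDensity L)) dq`. -/
theorem stmt16 {M : Type*} [MeasurableSpace M] (μ : Measure M) [SigmaFinite μ]
    (L : M → ℝ≥0) (hLmeas : Measurable L)
    (q : Measure M) [IsProbabilityMeasure q] (hqμ : q ≪ μ)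
    (hLpos : ∀ᵐ m ∂q, 0 < L m) :
    q ≪ μ.withDensity (fun m => (L m : ℝ≥0∞)) ∧
    (q.rnDeriv (μ.withDensity (fun m => (L m : ℝ≥0∞))))
      =ᵐ[q] (fun m => q.rnDeriv μ m / (L m : ℝ≥0∞)) ∧
    (Integrable (fun m => Real.log ((q.rnDeriv μ) m).toReal) q →
      Integrable (fun m => Real.log ((L m : ℝ))) q →
      Integrable (fun m =>
          Real.log ((q.rnDeriv (μ.withDensity (fun m' => (L m' : ℝ≥0∞)))) m).toReal) q ∧
      (∫ m, Real.log ((q.rnDeriv μ) m).toReal ∂q) - (∫ m, Real.log ((L m : ℝ)) ∂q)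
        = ∫ m, Real.log
            ((q.rnDeriv (μ.withDensity (fun m' => (L m' : ℝ≥0∞)))) m).toReal ∂q) := by
  have hL : Measurable fun m => (L m : ℝ≥0∞) := hLmeas.coe_nnreal_ennreal
  have hL_ne_top : ∀ᵐ m ∂μ, (L m : ℝ≥0∞) ≠ ∞ := ae_of_all _ fun _ => ENNReal.coe_ne_top
  have hL_ne_zero : ∀ᵐ m ∂q, (L m : ℝ≥0∞) ≠ 0 := by
    filter_upwards [hLpos] with m hm using ENNReal.coe_ne_zero.2 hm.ne'
  have hlog := log_toReal_rnDeriv_withDensity_right_ae_eq hL hL_ne_top hqμ hL_ne_zero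
  simp only [ENNReal.coe_toReal] at hlog
  refine ⟨absolutelyContinuous_withDensity_of_ae_ne_zero hL hqμ hL_ne_zero,
    rnDeriv_withDensity_right_ae_eq_div hL hL_ne_top hqμ hL_ne_zero, fun hint_rn hint_L => ?_⟩
  exact ⟨(hint_rn.sub hint_L).congr hlog.symm,
    by rw [integral_congr_ae hlog, integral_sub hint_rn hint_L]⟩
end

section
/- (KL-divergence with relaxed moment-matching constraints.) Let (M, 𝓑) be a measurable space, p a probability measure on M, T ≥ 1, ψ : M → ℝ^T a bounded measurable function (ℝ^T equipped with the Euclidean norm, which is self-dual), ψ̃ ∈ ℝ^T, and ε > 0. Assume the Slater-type qualification that there exists a probability measure q₀ ≪ p with log(dq₀/dp) q₀-integrable and ‖∫ ψ dq₀ − ψ̃‖ < ε. Then inf { KL(q ‖ p) : q a probability measure, q ≪ p, log(dq/dp) q-integrable, ‖∫ ψ dq − ψ̃‖ ≤ ε } = sup_{φ ∈ ℝ^T} ( ⟨φ, ψ̃⟩ − log ∫ exp(⟨φ, ψ(m)⟩) dp(m) − ε‖φ‖ ), and if φ̂ attains the supremum then the unique primal minimizer is the probability measure q̂ with density exp(⟨φ̂,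 ψ(m)⟩ − Λ_{φ̂}) with respect to p, where Λ_{φ̂} := log ∫ exp(⟨φ̂, ψ⟩) dp. -/
/-!
Weak duality is Gibbs' variational inequality `∫ f dq - log ∫ exp f dp ≤ KL(q ‖ p)` for
`f = ⟪φ, ψ⟫`, combined with Cauchy–Schwarz on the constraint `‖∫ ψ dq - ψ̃‖ ≤ ε`. The log-partition
function `Λ` is `B`-Lipschitz, so the dual objective is continuous, and the Slater point makes it
decay like `-(ε - δ) ‖φ‖`; hence it attains its maximum. At a maximizer `φ̂`, the one-sided
derivatives of `Λ` along lines through `φ̂` are means under the Gibbs measure `q̂ = p.tilted ⟪φ̂, ψ⟫`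
(derivatives of cumulant generating functions). Comparing with the maximality of `φ̂` in the
direction `ψ̃ - ∫ ψ dq̂` shows that `q̂` is feasible, and in the direction `-φ̂` that
`KL(q̂ ‖ p)` is at most the dual value at `φ̂`. Uniqueness is the equality case of Gibbs' inequality.
-/

open MeasureTheory Real

open ProbabilityTheory Filter Set
open scoped RealInnerProductSpace

section GibbsInequality

variable {α : Type*} [MeasurableSpace α] {p q : Measure α} [IsProbabilityMeasure p]
  [IsProbabilityMeasure q] {f : α → ℝ}

lemma integral_llr_nonneg (hqp : q ≪ p) : 0 ≤ ∫ x, llr q p x ∂q := by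
  rw [← InformationTheory.toReal_klDiv_of_measure_eq hqp (by simp)]
  exact ENNReal.toReal_nonneg

lemma eq_of_integral_llr_eq_zero (hqp : q ≪ p) (hllr : Integrable (llr q p) q)
    (h : ∫ x, llr q p x ∂q = 0) : q = p := by
  rw [← InformationTheory.toReal_klDiv_of_measure_eq hqp (by simp),
    ENNReal.toReal_eq_zero_iff] at h
  exact InformationTheory.klDiv_eq_zero_iff.mp
    (h.resolve_right (InformationTheory.klDiv_ne_top hqp hllr))

lemma integral_sub_log_integral_exp_le_integral_llr (hqp : q ≪ p)
    (hllr : Integrable (llr q p) q) (hfq : Integrable f q)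
    (hfp : Integrable (fun x => exp (f x)) p) :
    ∫ x, f x ∂q - log (∫ x, exp (f x) ∂p) ≤ ∫ x, llr q p x ∂q := by
  have := isProbabilityMeasure_tilted hfp
  have h := integral_llr_nonneg (hqp.trans (absolutelyContinuous_tilted hfp))
  rw [integral_llr_tilted_right hqp hfq hfp hllr] at h
  linarith

lemma eq_tilted_of_integral_llr_eq (hqp : q ≪ p) (hllr : Integrable (llr q p) q)
    (hfq : Integrable f q) (hfp : Integrable (fun x => exp (f x)) p)
    (h : ∫ x, llr q p x ∂q = ∫ x, f x ∂q - log (∫ x, exp (f x) ∂p)) :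
    q = p.tilted f := by
  have := isProbabilityMeasure_tilted hfp
  refine eq_of_integral_llr_eq_zero (hqp.trans (absolutelyContinuous_tilted hfp))
    (integrable_llr_tilted_right hqp hfq hllr hfp) ?_
  rw [integral_llr_tilted_right hqp hfq hfp hllr, h]
  ring

end GibbsInequality

lemma log_integral_exp_le_add {α : Type*} [MeasurableSpace α] {μ : Measure α} [NeZero μ]
    {f g : α → ℝ} {c : ℝ} (hf : Integrable (fun x => exp (f x)) μ)
    (hg : Integrable (fun x => exp (g x)) μ) (hfg : ∀ x, f x ≤ g x + c) :
    log (∫ x, exp (f x) ∂μ) ≤ log (∫ x, exp (g x) ∂μ) + c := by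
  have hle : ∫ x, exp (f x) ∂μ ≤ exp c * ∫ x, exp (g x) ∂μ := by
    rw [← integral_const_mul]
    refine integral_mono hf (hg.const_mul _) fun x => ?_
    rw [← exp_add]
    exact exp_le_exp.2 (by linarith [hfg x])
  calc log (∫ x, exp (f x) ∂μ) ≤ log (exp c * ∫ x, exp (g x) ∂μ) :=
        log_le_log (integral_exp_pos hf) hle
    _ = log (∫ x, exp (g x) ∂μ) + c := by
        rw [log_mul (exp_pos c).ne' (integral_exp_pos hg).ne', log_exp, add_comm]

lemma integrableExpSet_eq_univ_of_abs_le {α : Type*} [MeasurableSpace α] {μ : Measure α}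
    [IsFiniteMeasure μ] {X : α → ℝ} (hX : AEStronglyMeasurable X μ) {C : ℝ}
    (hXC : ∀ x, |X x| ≤ C) : integrableExpSet X μ = univ := by
  refine eq_univ_of_forall fun t => Integrable.of_bound
    (continuous_exp.comp_aestronglyMeasurable (hX.const_mul t)) (exp (|t| * C))
    (ae_of_all _ fun x => ?_)
  rw [norm_of_nonneg (exp_pos _).le, exp_le_exp]
  calc t * X x ≤ |t * X x| := le_abs_self _
    _ = |t| * |X x| := abs_mul _ _
    _ ≤ |t| * C := mul_le_mul_of_nonneg_left (hXC x) (abs_nonneg t)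

lemma HasDerivAt.le_of_forall_mul_le_sub {L : ℝ → ℝ} {D c : ℝ} (hL : HasDerivAt L D 0)
    (h : ∀ t ∈ Ioo (0 : ℝ) 1, c * t ≤ L t - L 0) : c ≤ D := by
  refine ge_of_tendsto hL.tendsto_slope_zero_right ?_
  filter_upwards [Ioo_mem_nhdsGT (zero_lt_one' ℝ)] with t ht
  rw [zero_add, smul_eq_mul, le_inv_mul_iff₀ ht.1, mul_comm]
  exact h t ht

lemma inner_sub_mul_norm_le_inner {E : Type*} [NormedAddCommGroup E] [InnerProductSpace ℝ E]
    {x y : E} {ε : ℝ} (h : ‖x - y‖ ≤ ε) (φ : E) : ⟪φ, y⟫ - ε * ‖φ‖ ≤ ⟪φ, x⟫ := by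
  have hcs := real_inner_le_norm φ (y - x)
  rw [inner_sub_right, norm_sub_rev] at hcs
  nlinarith [mul_le_mul_of_nonneg_left h (norm_nonneg φ)]

lemma abs_inner_le_of_norm_le {α E : Type*} [NormedAddCommGroup E] [InnerProductSpace ℝ E]
    {ψ : α → E} {B : ℝ} (hψB : ∀ m, ‖ψ m‖ ≤ B) (φ : E) (m : α) : |⟪φ, ψ m⟫| ≤ ‖φ‖ * B :=
  (abs_real_inner_le_norm φ (ψ m)).trans (mul_le_mul_of_nonneg_left (hψB m) (norm_nonneg φ))

lemma integrable_of_norm_le {α E : Type*} [MeasurableSpace α] [NormedAddCommGroup E]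
    {ψ : α → E} {B : ℝ} (hψ : StronglyMeasurable ψ) (hψB : ∀ m, ‖ψ m‖ ≤ B)
    (q : Measure α) [IsFiniteMeasure q] : Integrable ψ q :=
  Integrable.of_bound hψ.aestronglyMeasurable B (ae_of_all _ hψB)

lemma integrable_exp_inner {α E : Type*} [MeasurableSpace α] [NormedAddCommGroup E]
    [InnerProductSpace ℝ E] {ψ : α → E} {B : ℝ} (hψ : StronglyMeasurable ψ) (hψB : ∀ m, ‖ψ m‖ ≤ B)
    (q : Measure α) [IsFiniteMeasure q] (φ : E) : Integrable (fun m => exp ⟪φ, ψ m⟫) q := by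
  refine Integrable.of_bound
    (continuous_exp.comp_aestronglyMeasurable (stronglyMeasurable_const.inner hψ).aestronglyMeasurable)
    (exp (‖φ‖ * B)) (ae_of_all _ fun m => ?_)
  rw [norm_of_nonneg (exp_pos _).le, exp_le_exp]
  exact (le_abs_self _).trans (abs_inner_le_of_norm_le hψB φ m)

section DualProblem

variable {α E : Type*} [MeasurableSpace α] [NormedAddCommGroup E] [InnerProductSpace ℝ E]
  {p : Measure α} [IsProbabilityMeasure p] {ψ : α → E} {B : ℝ} {ψt : E} {ε : ℝ} {φhat : E}

noncomputable def logPartition (p : Measure α) (ψ : α → E) (φ : E) : ℝ :=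
  log (∫ m, exp ⟪φ, ψ m⟫ ∂p)

noncomputable def dualObjective (p : Measure α) (ψ : α → E) (ψt : E) (ε : ℝ) (φ : E) : ℝ :=
  ⟪φ, ψt⟫ - logPartition p ψ φ - ε * ‖φ‖

noncomputable def gibbsMeasure (p : Measure α) (ψ : α → E) (φ : E) : Measure α :=
  p.tilted fun m => ⟪φ, ψ m⟫

noncomputable def primalValues (p : Measure α) (ψ : α → E) (ψt : E) (ε : ℝ) : Set ℝ :=
  {r | ∃ q : Measure α, IsProbabilityMeasure q ∧ q ≪ p ∧ Integrable (llr q p) q ∧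
    ‖∫ m, ψ m ∂q - ψt‖ ≤ ε ∧ r = klDivR q p}

lemma lipschitzWith_logPartition (hψ : StronglyMeasurable ψ) (hψB : ∀ m, ‖ψ m‖ ≤ B) :
    LipschitzWith B.toNNReal (logPartition p ψ) := by
  refine LipschitzWith.of_le_add_mul' B fun φ φ' => ?_
  refine log_integral_exp_le_add (integrable_exp_inner hψ hψB p φ)
    (integrable_exp_inner hψ hψB p φ') fun m => ?_
  have h := (le_abs_self _).trans (abs_inner_le_of_norm_le hψB (φ - φ') m)
  rw [inner_sub_left, ← dist_eq_norm] at h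
  linarith

lemma continuous_dualObjective (hψ : StronglyMeasurable ψ) (hψB : ∀ m, ‖ψ m‖ ≤ B) :
    Continuous (dualObjective p ψ ψt ε) :=
  ((continuous_id.inner continuous_const).sub (lipschitzWith_logPartition hψ hψB).continuous).sub
    (continuous_const.mul continuous_norm)

lemma isProbabilityMeasure_gibbsMeasure (hψ : StronglyMeasurable ψ) (hψB : ∀ m, ‖ψ m‖ ≤ B)
    (φ : E) : IsProbabilityMeasure (gibbsMeasure p ψ φ) :=
  isProbabilityMeasure_tilted (integrable_exp_inner hψ hψB p φ)

lemma gibbsMeasure_eq_withDensity (hψ : StronglyMeasurable ψ) (hψB : ∀ m, ‖ψ m‖ ≤ B) (φ : E) :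
    gibbsMeasure p ψ φ =
      p.withDensity fun m => ENNReal.ofReal (exp (⟪φ, ψ m⟫ - logPartition p ψ φ)) := by
  simp_rw [gibbsMeasure, Measure.tilted, logPartition, exp_sub,
    exp_log (integral_exp_pos (integrable_exp_inner hψ hψB p φ))]

lemma llr_gibbsMeasure_ae (hψ : StronglyMeasurable ψ) (hψB : ∀ m, ‖ψ m‖ ≤ B) (φ : E) :
    llr (gibbsMeasure p ψ φ) p =ᵐ[gibbsMeasure p ψ φ]
      fun m => ⟪φ, ψ m⟫ - logPartition p ψ φ :=
  (tilted_absolutelyContinuous p _).ae_le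
    (log_rnDeriv_tilted_left_self (integrable_exp_inner hψ hψB p φ))

lemma logPartition_add_smul (hψ : StronglyMeasurable ψ) (hψB : ∀ m, ‖ψ m‖ ≤ B) (φ v : E)
    (t : ℝ) : logPartition p ψ (φ + t • v) =
      logPartition p ψ φ + cgf (fun m => ⟪v, ψ m⟫) (gibbsMeasure p ψ φ) t := by
  have hZ := integral_exp_pos (integrable_exp_inner hψ hψB p φ)
  have hZ' := integral_exp_pos (integrable_exp_inner hψ hψB p (φ + t • v))
  unfold cgf mgf gibbsMeasure logPartition at *
  rw [integral_exp_tilted]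
  simp only [Pi.add_apply, inner_add_left, inner_smul_left, conj_trivial] at hZ' ⊢
  rw [log_div hZ'.ne' hZ.ne']
  ring

lemma integrable_llr_gibbsMeasure (hψ : StronglyMeasurable ψ) (hψB : ∀ m, ‖ψ m‖ ≤ B) (φ : E) :
    Integrable (llr (gibbsMeasure p ψ φ) p) (gibbsMeasure p ψ φ) := by
  have := isProbabilityMeasure_gibbsMeasure hψ hψB (p := p) φ
  exact (((integrable_of_norm_le hψ hψB _).const_inner φ).sub (integrable_const _)).congr
    (llr_gibbsMeasure_ae hψ hψB φ).symm

variable [CompleteSpace E]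

omit [IsProbabilityMeasure p] in
lemma dualObjective_le_integral_inner_sub_logPartition (hψ : StronglyMeasurable ψ)
    (hψB : ∀ m, ‖ψ m‖ ≤ B) {q : Measure α} [IsFiniteMeasure q]
    (hfeas : ‖∫ m, ψ m ∂q - ψt‖ ≤ ε) (φ : E) :
    dualObjective p ψ ψt ε φ ≤ ∫ m, ⟪φ, ψ m⟫ ∂q - logPartition p ψ φ := by
  rw [integral_inner (integrable_of_norm_le hψ hψB q) φ]
  unfold dualObjective
  linarith [inner_sub_mul_norm_le_inner hfeas φ]

lemma dualObjective_le_integral_llr (hψ : StronglyMeasurable ψ) (hψB : ∀ m, ‖ψ m‖ ≤ B)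
    {q : Measure α} [IsProbabilityMeasure q] (hqp : q ≪ p) (hllr : Integrable (llr q p) q)
    (hfeas : ‖∫ m, ψ m ∂q - ψt‖ ≤ ε) (φ : E) :
    dualObjective p ψ ψt ε φ ≤ ∫ x, llr q p x ∂q :=
  (dualObjective_le_integral_inner_sub_logPartition hψ hψB hfeas φ).trans
    (integral_sub_log_integral_exp_le_integral_llr hqp hllr
      ((integrable_of_norm_le hψ hψB q).const_inner φ) (integrable_exp_inner hψ hψB p φ))

lemma exists_forall_dualObjective_le [ProperSpace E] (hψ : StronglyMeasurable ψ)
    (hψB : ∀ m, ‖ψ m‖ ≤ B) {q₀ : Measure α} [IsProbabilityMeasure q₀] (hq₀p : q₀ ≪ p)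
    (hllr₀ : Integrable (llr q₀ p) q₀) (hslater : ‖∫ m, ψ m ∂q₀ - ψt‖ < ε) :
    ∃ φhat, ∀ φ, dualObjective p ψ ψt ε φ ≤ dualObjective p ψ ψt ε φhat := by
  set δ := ‖∫ m, ψ m ∂q₀ - ψt‖
  have hbound : ∀ φ, dualObjective p ψ ψt ε φ ≤ ∫ x, llr q₀ p x ∂q₀ - (ε - δ) * ‖φ‖ := by
    intro φ
    have h := dualObjective_le_integral_llr (ψt := ψt) hψ hψB hq₀p hllr₀ (le_refl δ) φ
    unfold dualObjective at h ⊢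
    linarith
  refine (continuous_dualObjective hψ hψB).exists_forall_ge (tendsto_atBot_mono hbound ?_)
  exact tendsto_atBot_add_const_left _ _ (tendsto_neg_atTop_atBot.comp
    (tendsto_norm_cocompact_atTop.const_mul_atTop (sub_pos.2 hslater)))

lemma integral_llr_gibbsMeasure (hψ : StronglyMeasurable ψ) (hψB : ∀ m, ‖ψ m‖ ≤ B) (φ : E) :
    ∫ x, llr (gibbsMeasure p ψ φ) p x ∂gibbsMeasure p ψ φ =
      ⟪φ, ∫ m, ψ m ∂gibbsMeasure p ψ φ⟫ - logPartition p ψ φ := by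
  have := isProbabilityMeasure_gibbsMeasure hψ hψB (p := p) φ
  have hint := integrable_of_norm_le hψ hψB (gibbsMeasure p ψ φ)
  rw [integral_congr_ae (llr_gibbsMeasure_ae hψ hψB φ),
    integral_sub (hint.const_inner φ) (integrable_const _), integral_inner hint, integral_const,
    probReal_univ, one_smul]

lemma hasDerivAt_logPartition_add_smul (hψ : StronglyMeasurable ψ) (hψB : ∀ m, ‖ψ m‖ ≤ B)
    (φ v : E) : HasDerivAt (fun t : ℝ => logPartition p ψ (φ + t • v))
      ⟪v, ∫ m, ψ m ∂gibbsMeasure p ψ φ⟫ 0 := by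
  have := isProbabilityMeasure_gibbsMeasure hψ hψB (p := p) φ
  have h0 : (0 : ℝ) ∈ interior (integrableExpSet (fun m => ⟪v, ψ m⟫) (gibbsMeasure p ψ φ)) := by
    rw [integrableExpSet_eq_univ_of_abs_le (stronglyMeasurable_const.inner hψ).aestronglyMeasurable
      (abs_inner_le_of_norm_le hψB v), interior_univ]
    trivial
  have hcgf := (analyticAt_cgf h0).differentiableAt.hasDerivAt
  rw [deriv_cgf_zero h0, probReal_univ, div_one,
    integral_inner (integrable_of_norm_le hψ hψB _) v] at hcgf
  simp_rw [logPartition_add_smul hψ hψB φ v]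
  exact hcgf.const_add _

lemma inner_sub_mul_le_inner_integral_gibbsMeasure (hψ : StronglyMeasurable ψ)
    (hψB : ∀ m, ‖ψ m‖ ≤ B) (hε : 0 ≤ ε)
    (hmax : ∀ φ, dualObjective p ψ ψt ε φ ≤ dualObjective p ψ ψt ε φhat) (v : E) {c : ℝ}
    (hc : ∀ t ∈ Ioo (0 : ℝ) 1, ‖φhat + t • v‖ ≤ ‖φhat‖ + t * c) :
    ⟪v, ψt⟫ - ε * c ≤ ⟪v, ∫ m, ψ m ∂gibbsMeasure p ψ φhat⟫ := by
  refine (hasDerivAt_logPartition_add_smul hψ hψB φhat v).le_of_forall_mul_le_sub fun t ht => ?_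
  have hstep := hmax (φhat + t • v)
  have hnorm := mul_le_mul_of_nonneg_left (hc t ht) hε
  simp only [dualObjective, inner_add_left, inner_smul_left, conj_trivial] at hstep
  simp only [zero_smul, add_zero]
  linarith

lemma norm_integral_gibbsMeasure_sub_le (hψ : StronglyMeasurable ψ) (hψB : ∀ m, ‖ψ m‖ ≤ B)
    (hε : 0 ≤ ε) (hmax : ∀ φ, dualObjective p ψ ψt ε φ ≤ dualObjective p ψ ψt ε φhat) :
    ‖∫ m, ψ m ∂gibbsMeasure p ψ φhat - ψt‖ ≤ ε := by
  set μhat := ∫ m, ψ m ∂gibbsMeasure p ψ φhat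
  have h := inner_sub_mul_le_inner_integral_gibbsMeasure hψ hψB hε hmax (ψt - μhat)
    (c := ‖ψt - μhat‖) fun t ht => (norm_add_le _ _).trans_eq (by
      rw [norm_smul, norm_of_nonneg ht.1.le])
  have hsq := real_inner_self_eq_norm_mul_norm (ψt - μhat)
  rw [inner_sub_right] at hsq
  rw [norm_sub_rev]
  nlinarith [norm_nonneg (ψt - μhat)]

lemma integral_llr_gibbsMeasure_le_dualObjective (hψ : StronglyMeasurable ψ)
    (hψB : ∀ m, ‖ψ m‖ ≤ B) (hε : 0 ≤ ε)
    (hmax : ∀ φ, dualObjective p ψ ψt ε φ ≤ dualObjective p ψ ψt ε φhat) :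
    ∫ x, llr (gibbsMeasure p ψ φhat) p x ∂gibbsMeasure p ψ φhat ≤ dualObjective p ψ ψt ε φhat := by
  have h := inner_sub_mul_le_inner_integral_gibbsMeasure hψ hψB hε hmax (-φhat)
    (c := -‖φhat‖) fun t ht => by
      have hline : φhat + t • -φhat = (1 - t) • φhat := by module
      rw [hline, norm_smul, norm_of_nonneg (by linarith [ht.2])]
      linarith
  rw [integral_llr_gibbsMeasure hψ hψB, dualObjective]
  simp only [inner_neg_left] at h
  linarith

lemma integral_llr_gibbsMeasure_eq_dualObjective (hψ : StronglyMeasurable ψ)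
    (hψB : ∀ m, ‖ψ m‖ ≤ B) (hε : 0 ≤ ε)
    (hmax : ∀ φ, dualObjective p ψ ψt ε φ ≤ dualObjective p ψ ψt ε φhat) :
    ∫ x, llr (gibbsMeasure p ψ φhat) p x ∂gibbsMeasure p ψ φhat = dualObjective p ψ ψt ε φhat := by
  have := isProbabilityMeasure_gibbsMeasure hψ hψB (p := p) φhat
  exact (integral_llr_gibbsMeasure_le_dualObjective hψ hψB hε hmax).antisymm
    (dualObjective_le_integral_llr (q := gibbsMeasure p ψ φhat) hψ hψB
      (tilted_absolutelyContinuous p _)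
      (integrable_llr_gibbsMeasure hψ hψB φhat) (norm_integral_gibbsMeasure_sub_le hψ hψB hε hmax)
      φhat)

lemma sInf_primalValues (hψ : StronglyMeasurable ψ) (hψB : ∀ m, ‖ψ m‖ ≤ B) (hε : 0 ≤ ε)
    (hmax : ∀ φ, dualObjective p ψ ψt ε φ ≤ dualObjective p ψ ψt ε φhat) :
    sInf (primalValues p ψ ψt ε) = dualObjective p ψ ψt ε φhat := by
  refine IsLeast.csInf_eq ⟨⟨gibbsMeasure p ψ φhat, isProbabilityMeasure_gibbsMeasure hψ hψB φhat,
    tilted_absolutelyContinuous p _, integrable_llr_gibbsMeasure hψ hψB φhat,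
    norm_integral_gibbsMeasure_sub_le hψ hψB hε hmax,
    (integral_llr_gibbsMeasure_eq_dualObjective hψ hψB hε hmax).symm⟩, ?_⟩
  rintro r ⟨q, hq, hqp, hllr, hfeas, rfl⟩
  exact dualObjective_le_integral_llr hψ hψB hqp hllr hfeas φhat

lemma eq_gibbsMeasure_of_integral_llr_le_dualObjective (hψ : StronglyMeasurable ψ)
    (hψB : ∀ m, ‖ψ m‖ ≤ B) {q : Measure α} [IsProbabilityMeasure q] (hqp : q ≪ p)
    (hllr : Integrable (llr q p) q) (hfeas : ‖∫ m, ψ m ∂q - ψt‖ ≤ ε) {φ : E}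
    (hkl : ∫ x, llr q p x ∂q ≤ dualObjective p ψ ψt ε φ) : q = gibbsMeasure p ψ φ := by
  have hfq := (integrable_of_norm_le hψ hψB q).const_inner (𝕜 := ℝ) φ
  have hfp := integrable_exp_inner hψ hψB p φ
  exact eq_tilted_of_integral_llr_eq hqp hllr hfq hfp
    ((hkl.trans (dualObjective_le_integral_inner_sub_logPartition hψ hψB hfeas φ)).antisymm
      (integral_sub_log_integral_exp_le_integral_llr hqp hllr hfq hfp))

end DualProblem

theorem stmt17_general {M : Type*} [MeasurableSpace M] (p : Measure M) [IsProbabilityMeasure p]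
    (T : ℕ)
    (ψ : M → EuclideanSpace ℝ (Fin T)) (hψ : Measurable ψ)
    (B : ℝ) (hψB : ∀ m, ‖ψ m‖ ≤ B)
    (ψt : EuclideanSpace ℝ (Fin T)) (ε : ℝ) (hε : 0 < ε)
    (slater : ∃ q₀ : Measure M, IsProbabilityMeasure q₀ ∧ q₀ ≪ p ∧
        Integrable (fun m => Real.log ((q₀.rnDeriv p) m).toReal) q₀ ∧
        ‖(∫ m, ψ m ∂q₀) - ψt‖ < ε) :
    (sInf {r : ℝ | ∃ q : Measure M, IsProbabilityMeasure q ∧ q ≪ p ∧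
          Integrable (fun m => Real.log ((q.rnDeriv p) m).toReal) q ∧
          ‖(∫ m, ψ m ∂q) - ψt‖ ≤ ε ∧ r = klDivR q p}
      = ⨆ φ : EuclideanSpace ℝ (Fin T),
          ((inner ℝ φ ψt : ℝ) - Real.log (∫ m, Real.exp ((inner ℝ φ (ψ m) : ℝ)) ∂p)
            - ε * ‖φ‖)) ∧
    (∀ φhat : EuclideanSpace ℝ (Fin T),
      (∀ φ : EuclideanSpace ℝ (Fin T),
        (inner ℝ φ ψt : ℝ) - Real.log (∫ m, Real.exp ((inner ℝ φ (ψ m) : ℝ)) ∂p) - ε * ‖φ‖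
          ≤ (inner ℝ φhat ψt : ℝ)
            - Real.log (∫ m, Real.exp ((inner ℝ φhat (ψ m) : ℝ)) ∂p) - ε * ‖φhat‖) →
      ∀ qhat : Measure M,
        qhat = p.withDensity (fun m => ENNReal.ofReal (Real.exp
            ((inner ℝ φhat (ψ m) : ℝ)
              - Real.log (∫ m', Real.exp ((inner ℝ φhat (ψ m') : ℝ)) ∂p)))) →
        (IsProbabilityMeasure qhat ∧ qhat ≪ p ∧
          Integrable (fun m => Real.log ((qhat.rnDeriv p) m).toReal) qhat ∧
          ‖(∫ m, ψ m ∂qhat) - ψt‖ ≤ ε) ∧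
        klDivR qhat p
          = sInf {r : ℝ | ∃ q : Measure M, IsProbabilityMeasure q ∧ q ≪ p ∧
              Integrable (fun m => Real.log ((q.rnDeriv p) m).toReal) q ∧
              ‖(∫ m, ψ m ∂q) - ψt‖ ≤ ε ∧ r = klDivR q p} ∧
        (∀ q : Measure M, IsProbabilityMeasure q → q ≪ p →
          Integrable (fun m => Real.log ((q.rnDeriv p) m).toReal) q →
          ‖(∫ m, ψ m ∂q) - ψt‖ ≤ ε →
          klDivR q p = klDivR qhat p → q = qhat)) := by
  replace hψ := hψ.stronglyMeasurable
  obtain ⟨q₀, hq₀, hq₀p, hllr₀, hslater⟩ := slater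
  obtain ⟨φ₀, hφ₀⟩ := exists_forall_dualObjective_le hψ hψB hq₀p hllr₀ hslater
  refine ⟨(sInf_primalValues hψ hψB hε.le hφ₀).trans
    (ciSup_eq_of_forall_le_of_forall_lt_exists_gt hφ₀ fun _ h => ⟨φ₀, h⟩).symm,
    fun φhat hmax qhat hqhat => ?_⟩
  obtain rfl : qhat = gibbsMeasure p ψ φhat :=
    hqhat.trans (gibbsMeasure_eq_withDensity hψ hψB φhat).symm
  have hkl := integral_llr_gibbsMeasure_eq_dualObjective hψ hψB hε.le hmax
  refine ⟨⟨isProbabilityMeasure_gibbsMeasure hψ hψB φhat, tilted_absolutelyContinuous p _,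
    integrable_llr_gibbsMeasure hψ hψB φhat, norm_integral_gibbsMeasure_sub_le hψ hψB hε.le hmax⟩,
    hkl.trans (sInf_primalValues hψ hψB hε.le hmax).symm,
    fun q hq hqp hllr hfeas hq_eq => ?_⟩
  exact eq_gibbsMeasure_of_integral_llr_le_dualObjective hψ hψB hqp hllr hfeas
    (hq_eq.trans hkl).le

/-- Lemma 5 of the paper (KL-divergence minimization with relaxed moment-matching
constraints, specialized to `B = ℝ^T` with the self-dual Euclidean norm). Under a
Slater-type qualification, the infimum of `KL(q‖p)` over probability measures `q ≪ p`
with `‖∫ ψ dq − ψ̃‖ ≤ ε` equals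
`sup_φ (⟨φ, ψ̃⟩ − log ∫ exp ⟨φ,ψ⟩ dp − ε‖φ‖)`, and if `φ̂` attains the supremum then the
unique primal minimizer is the Gibbs measure `q̂` with density `exp(⟨φ̂,ψ⟩ − Λ_{φ̂})`
with respect to `p`, where `Λ_{φ̂} = log ∫ exp ⟨φ̂,ψ⟩ dp`. -/
theorem stmt17 {M : Type*} [MeasurableSpace M] (p : Measure M) [IsProbabilityMeasure p]
    (T : ℕ) (hT : 1 ≤ T)
    (ψ : M → EuclideanSpace ℝ (Fin T)) (hψ : Measurable ψ)
    (B : ℝ) (hψB : ∀ m, ‖ψ m‖ ≤ B)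
    (ψt : EuclideanSpace ℝ (Fin T)) (ε : ℝ) (hε : 0 < ε)
    (slater : ∃ q₀ : Measure M, IsProbabilityMeasure q₀ ∧ q₀ ≪ p ∧
        Integrable (fun m => Real.log ((q₀.rnDeriv p) m).toReal) q₀ ∧
        ‖(∫ m, ψ m ∂q₀) - ψt‖ < ε) :
    (sInf {r : ℝ | ∃ q : Measure M, IsProbabilityMeasure q ∧ q ≪ p ∧
          Integrable (fun m => Real.log ((q.rnDeriv p) m).toReal) q ∧
          ‖(∫ m, ψ m ∂q) - ψt‖ ≤ ε ∧ r = klDivR q p}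
      = ⨆ φ : EuclideanSpace ℝ (Fin T),
          ((inner ℝ φ ψt : ℝ) - Real.log (∫ m, Real.exp ((inner ℝ φ (ψ m) : ℝ)) ∂p)
            - ε * ‖φ‖)) ∧
    (∀ φhat : EuclideanSpace ℝ (Fin T),
      (∀ φ : EuclideanSpace ℝ (Fin T),
        (inner ℝ φ ψt : ℝ) - Real.log (∫ m, Real.exp ((inner ℝ φ (ψ m) : ℝ)) ∂p) - ε * ‖φ‖
          ≤ (inner ℝ φhat ψt : ℝ)
            - Real.log (∫ m, Real.exp ((inner ℝ φhat (ψ m) : ℝ)) ∂p) - ε * ‖φhat‖) →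
      ∀ qhat : Measure M,
        qhat = p.withDensity (fun m => ENNReal.ofReal (Real.exp
            ((inner ℝ φhat (ψ m) : ℝ)
              - Real.log (∫ m', Real.exp ((inner ℝ φhat (ψ m') : ℝ)) ∂p)))) →
        (IsProbabilityMeasure qhat ∧ qhat ≪ p ∧
          Integrable (fun m => Real.log ((qhat.rnDeriv p) m).toReal) qhat ∧
          ‖(∫ m, ψ m ∂qhat) - ψt‖ ≤ ε) ∧
        klDivR qhat p
          = sInf {r : ℝ | ∃ q : Measure M, IsProbabilityMeasure q ∧ q ≪ p ∧
              Integrable (fun m => Real.log ((q.rnDeriv p) m).toReal) q ∧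
              ‖(∫ m, ψ m ∂q) - ψt‖ ≤ ε ∧ r = klDivR q p} ∧
        (∀ q : Measure M, IsProbabilityMeasure q → q ≪ p →
          Integrable (fun m => Real.log ((q.rnDeriv p) m).toReal) q →
          ‖(∫ m, ψ m ∂q) - ψt‖ ≤ ε →
          klDivR q p = klDivR qhat p → q = qhat)) :=
  stmt17_general p T ψ hψ B hψB ψt ε hε slater
end
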